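/- arXiv:1302.3940 — 2 statements merged into one kernel-verified Lean document; each statement's English description precedes it below -/
import Mathlib

section
/- If w and w' are stable blocks over {0,1,2} and n ≥ max{|w|, |w'|}, then the block w 0^{n+1} w' is stable. Consequently, every finite concatenation of blocks from the code C is stable. -/
open Set Function

/-- The map `x ↦ σᵐ(x)` on the full shift `A^ℤ`, where `σᵐ(x)_i = x_{i+m}`. -/
def shiftZ (A : Type*) (m : ℤ) : (ℤ → A) → ℤ → A := fun x i => x (i + m)

/-- The shift map `σ` on the full shift `A^ℤ`: `σ(x)_i = x_{i+1}`. -/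
abbrev shiftMap (A : Type*) : (ℤ → A) → ℤ → A := shiftZ A 1

/-- The inverse shift map `σ⁻¹`: `σ⁻¹(x)_i = x_{i-1}`. -/
abbrev shiftInv (A : Type*) : (ℤ → A) → ℤ → A := shiftZ A (-1)

/-- The reversal map `ρ`: `ρ(x)_i = x_{-i}`. -/
def revMap (A : Type*) : (ℤ → A) → ℤ → A := fun x i => x (-i)

/-- A shift space over `A`: a nonempty closed subset of `A^ℤ` with `σ(X) = X`. -/
def IsShiftSpace {A : Type*} [TopologicalSpace A] (X : Set (ℤ → A)) : Prop :=
  X.Nonempty ∧ IsClosed X ∧ shiftMap A '' X = X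

/-- The word `w` occurs in `x` at position `i`, i.e. `x_{[i, i+|w|-1]} = w`. -/
def OccursAt {A : Type*} (w : List A) (x : ℤ → A) (i : ℤ) : Prop :=
  ∀ k : Fin w.length, x (i + (k : ℕ)) = w.get k

/-- `w` is a block of `X`: it occurs in some point of `X`. -/
def IsBlockOf {A : Type*} (X : Set (ℤ → A)) (w : List A) : Prop :=
  ∃ x ∈ X, ∃ i : ℤ, OccursAt w x i

/-- `X` is irreducible: any two blocks can be joined by a block. -/
def ShiftIrreducible {A : Type*} (X : Set (ℤ → A)) : Prop :=
  ∀ u v : List A, IsBlockOf X u → IsBlockOf X v → ∃ w : List A, IsBlockOf X (u ++ w ++ v)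

/-- `w` is a finitary (intrinsically synchronizing) block of `X`. -/
def IsFinitary {A : Type*} (X : Set (ℤ → A)) (w : List A) : Prop :=
  IsBlockOf X w ∧ ∀ u v : List A, IsBlockOf X (u ++ w) → IsBlockOf X (w ++ v) →
    IsBlockOf X (u ++ w ++ v)

/-- A synchronized system: an irreducible shift space with a finitary block. -/
def IsSynchronized {A : Type*} [TopologicalSpace A] (X : Set (ℤ → A)) : Prop :=
  IsShiftSpace X ∧ ShiftIrreducible X ∧ ∃ w : List A, IsFinitary X w

/-- `φ` (as a map of the ambient full shift) restricts to a flip for `(X, σ_X)`: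
a homeomorphism `X → X` with `φ ∘ φ = id` and `φ ∘ σ_X = σ_X⁻¹ ∘ φ`.
(Being a homeomorphism is automatic from continuity and `φ ∘ φ = id` on `X`.) -/
def IsFlip {A : Type*} [TopologicalSpace A] (X : Set (ℤ → A))
    (φ : (ℤ → A) → ℤ → A) : Prop :=
  MapsTo φ X X ∧ ContinuousOn φ X ∧ (∀ x ∈ X, φ (φ x) = x) ∧
    ∀ x ∈ X, φ (shiftMap A x) = shiftInv A (φ x)

/-- The shift-flip systems `(X, σ_X, φ)` and `(Y, σ_Y, ψ)` are conjugate: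
there is a homeomorphism `Φ : X → Y` with `Φ ∘ σ_X = σ_Y ∘ Φ` and `Φ ∘ φ = ψ ∘ Φ`. -/
def SystemConj {A B : Type*} [TopologicalSpace A] [TopologicalSpace B]
    (X : Set (ℤ → A)) (φ : (ℤ → A) → ℤ → A)
    (Y : Set (ℤ → B)) (ψ : (ℤ → B) → ℤ → B) : Prop :=
  ∃ (Φ : (ℤ → A) → ℤ → B) (Ψ : (ℤ → B) → ℤ → A),
    MapsTo Φ X Y ∧ ContinuousOn Φ X ∧ MapsTo Ψ Y X ∧ ContinuousOn Ψ Y ∧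
    InvOn Ψ Φ X Y ∧
    (∀ x ∈ X, Φ (shiftMap A x) = shiftMap B (Φ x)) ∧ ∀ x ∈ X, Φ (φ x) = ψ (Φ x)

/-- Two flips `φ, φ'` for `(X, σ_X)` are conjugate. -/
def FlipConj {A : Type*} [TopologicalSpace A] (X : Set (ℤ → A))
    (φ φ' : (ℤ → A) → ℤ → A) : Prop :=
  SystemConj X φ X φ'

/-- `F(φ; n) = {x ∈ X : σ_X^n(x) = x and φ(x) = x}`. -/
def flipFix {A : Type*} (X : Set (ℤ → A)) (φ : (ℤ → A) → ℤ → A) (n : ℕ) :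
    Set (ℤ → A) :=
  {x ∈ X | (shiftMap A)^[n] x = x ∧ φ x = x}

/-- `A(φ)`: points of `X` in which some finitary block occurs infinitely often and
which differ from their `φ`-image in at least one but only finitely many coordinates. -/
def flipAsym {A : Type*} (X : Set (ℤ → A)) (φ : (ℤ → A) → ℤ → A) :
    Set (ℤ → A) :=
  {x ∈ X | (∃ w : List A, IsFinitary X w ∧ {i : ℤ | OccursAt w x i}.Infinite) ∧
    {i : ℤ | φ x i ≠ x i}.Nonempty ∧ {i : ℤ | φ x i ≠ x i}.Finite}

/-- `x` is a bi-infinite concatenation of words from `C`. -/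
def IsConcat {A : Type*} (C : Set (List A)) (x : ℤ → A) : Prop :=
  ∃ t : ℤ → ℤ, StrictMono t ∧ (∀ n : ℤ, ∃ j : ℤ, t j ≤ n ∧ n < t (j + 1)) ∧
    ∀ j : ℤ, ∃ w ∈ C, t (j + 1) = t j + w.length ∧ OccursAt w x (t j)

/-- A coded system: a shift space in which the set of bi-infinite concatenations of
words from some code `C` is dense. -/
def IsCoded {A : Type*} [TopologicalSpace A] (X : Set (ℤ → A)) : Prop :=
  IsShiftSpace X ∧ ∃ C : Set (List A), closure {x | IsConcat C x} = X
/-- The set `I = ⋃_{k ≥ 1} [2^{2k}, 2^{2k+1}] ⊆ ℕ`. -/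
def wordI : Set ℕ := {n | ∃ k : ℕ, 1 ≤ k ∧ 2 ^ (2 * k) ≤ n ∧ n ≤ 2 ^ (2 * k + 1)}

/-- The set `J = {(0,0), (1,1), (1,2), (2,1), (2,2)} ⊆ A × A`, `A = {0,1,2}`. -/
def setJ : Set (Fin 3 × Fin 3) := {(0, 0), (1, 1), (1, 2), (2, 1), (2, 2)}

/-- The word `0^n` over `{0,1,2}`. -/
def zeros (n : ℕ) : List (Fin 3) := List.replicate n 0

/-- A word `w` over `{0,1,2}` is stable if (1) neither `12` nor `21` occurs in `w`, and
(2) whenever `x ∈ A^ℤ` satisfies `x_{[1, 3|w|+2]} = 0^{|w|+1} w 0^{|w|+1}`, and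
`1 ≤ n ≤ |w|`, `a ∈ {1,2}`, `|w|+1 ≤ i < j ≤ 2|w|+2` are such that `x_{[i,j]} = 0 aⁿ 0`,
then `a = 1` iff `(n, (x_{i-n}, x_{j+n})) ∈ (I × J) ∪ (Iᶜ × Jᶜ)`. -/
def Stable (w : List (Fin 3)) : Prop :=
  (¬ [1, 2] <:+: w) ∧ (¬ [2, 1] <:+: w) ∧
    ∀ x : ℤ → Fin 3,
      OccursAt (zeros (w.length + 1) ++ w ++ zeros (w.length + 1)) x 1 →
      ∀ (n : ℕ) (a : Fin 3) (i j : ℤ),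
        1 ≤ n → n ≤ w.length → (a = 1 ∨ a = 2) →
        (w.length : ℤ) + 1 ≤ i → i < j → j ≤ 2 * (w.length : ℤ) + 2 →
        j = i + n + 1 → x i = 0 → x j = 0 → (∀ k : ℤ, i < k → k < j → x k = a) →
        (a = 1 ↔ (n ∈ wordI ∧ (x (i - n), x (j + n)) ∈ setJ) ∨
          (n ∉ wordI ∧ (x (i - n), x (j + n)) ∉ setJ))

/-- The code `C = {0} ∪ {0^{|w|+1} w 0^{|w|+1} : w is stable}`. -/
def codeC : Set (List (Fin 3)) :=
  {[0]} ∪ {u | ∃ w : List (Fin 3), Stable w ∧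
    u = zeros (w.length + 1) ++ w ++ zeros (w.length + 1)}

/-- The coded system `W`: the closure of the set of bi-infinite concatenations of
words from the code `C`. -/
def spaceW : Set (ℤ → Fin 3) := closure {x | IsConcat codeC x}

/-- `W₀ = {x ∈ W : x_i ≠ 0 for only finitely many i}`. -/
def spaceW0 : Set (ℤ → Fin 3) := {x ∈ spaceW | {i : ℤ | x i ≠ 0}.Finite}

/-!
Stability of a word `w` only involves its zero extension `⋯ 0 0 w 0 0 ⋯`, and only locally:
a run `0 aⁿ 0` of nonzero letters of `w`, together with the two letters at distance `n` from it,
lies in the padded copy `0^{|w|+1} w 0^{|w|}`. Hence a word is stable as soon as each of its nonzero letters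
lies in such a padded copy of some stable word. The word `w 0^{n+1} w'` is covered by the copies
of `w` and `w'` because `n ≥ |w|, |w'|`, and a concatenation of code words by the copies that each
code word `0^{|w|+1} w 0^{|w|+1}` carries inside itself.
-/

section ZeroExt

variable {α : Type*} [Zero α]

def zeroExt (l : List α) (s : ℤ) : α :=
  if 0 ≤ s then l.getD s.toNat 0 else 0

lemma zeroExt_of_neg {l : List α} {s : ℤ} (hs : s < 0) : zeroExt l s = 0 :=
  if_neg hs.not_ge

lemma zeroExt_of_length_le {l : List α} {s : ℤ} (hs : (l.length : ℤ) ≤ s) :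
    zeroExt l s = 0 := by
  rw [zeroExt, if_pos (by omega), List.getD_eq_default _ _ (by omega)]

lemma zeroExt_of_lt_length {l : List α} {s : ℤ} (h₀ : 0 ≤ s) (hs : s < l.length) :
    zeroExt l s = l[s.toNat] := by
  rw [zeroExt, if_pos h₀, List.getD_eq_getElem]

lemma bounds_of_zeroExt_ne_zero {l : List α} {s : ℤ} (h : zeroExt l s ≠ 0) :
    0 ≤ s ∧ s < l.length := by
  by_contra hs
  rcases not_and_or.1 hs with hs | hs
  · exact h (zeroExt_of_neg (not_le.1 hs))
  · exact h (zeroExt_of_length_le (not_lt.1 hs))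

lemma zeroExt_append_of_lt {l l' : List α} {s : ℤ} (hs : s < l.length) :
    zeroExt (l ++ l') s = zeroExt l s := by
  unfold zeroExt
  split_ifs with h₀
  · exact List.getD_append _ _ _ _ (by omega)
  · rfl

lemma zeroExt_append_of_le {l l' : List α} {s : ℤ} (hs : (l.length : ℤ) ≤ s) :
    zeroExt (l ++ l') s = zeroExt l' (s - l.length) := by
  rw [zeroExt, zeroExt, if_pos (by omega), if_pos (by omega),
    List.getD_append_right _ _ _ _ (by omega)]
  congr 1
  omega

@[simp]
lemma zeroExt_replicate_zero (m : ℕ) : zeroExt (List.replicate m (0 : α)) = 0 := by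
  funext s
  simp [zeroExt, List.getD_eq_getElem?_getD]

lemma zeroExt_append_replicate_zero (l : List α) (m : ℕ) :
    zeroExt (l ++ List.replicate m 0) = zeroExt l := by
  funext s
  rcases lt_or_ge s l.length with hs | hs
  · exact zeroExt_append_of_lt hs
  · rw [zeroExt_append_of_le hs, zeroExt_replicate_zero, zeroExt_of_length_le hs, Pi.zero_apply]

lemma zeroExt_replicate_zero_append (m : ℕ) (l : List α) (s : ℤ) :
    zeroExt (List.replicate m 0 ++ l) s = zeroExt l (s - m) := by
  rcases lt_or_ge s m with hs | hs
  · rw [zeroExt_append_of_lt (by simpa using hs), zeroExt_replicate_zero,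
      zeroExt_of_neg (by omega), Pi.zero_apply]
  · rw [zeroExt_append_of_le (by simpa using hs), List.length_replicate]

lemma occursAt_iff_zeroExt (u : List α) (x : ℤ → α) (i : ℤ) :
    OccursAt u x i ↔ ∀ k : ℤ, 0 ≤ k → k < u.length → x (i + k) = zeroExt u k := by
  constructor
  · intro h k h₀ hk
    have := h ⟨k.toNat, by omega⟩
    simp only [List.get_eq_getElem, Int.toNat_of_nonneg h₀] at this
    rw [zeroExt_of_lt_length h₀ hk, ← this]
  · intro h k
    rw [h k (by positivity) (by simp), zeroExt_of_lt_length (by positivity) (by simp)]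
    simp

lemma zeroExt_eq_iff {l : List α} {a : α} (ha : a ≠ 0) (s : ℤ) :
    zeroExt l s = a ↔ 0 ≤ s ∧ l[s.toNat]? = some a := by
  unfold zeroExt
  split_ifs with h₀
  · rw [List.getD_eq_getElem?_getD]
    cases l[s.toNat]? <;> simp [h₀, Ne.symm ha]
  · simp [h₀, Ne.symm ha]

lemma infix_pair_iff {l : List α} {a b : α} (ha : a ≠ 0) (hb : b ≠ 0) :
    [a, b] <:+: l ↔ ∃ s : ℤ, zeroExt l s = a ∧ zeroExt l (s + 1) = b := by
  simp only [List.infix_iff_getElem?, zeroExt_eq_iff ha, zeroExt_eq_iff hb]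
  constructor
  · rintro ⟨k, -, hk⟩
    refine ⟨k, ⟨by omega, ?_⟩, by omega, ?_⟩
    · simpa using hk 0 (by simp)
    · simpa [add_comm] using hk 1 (by simp)
  · rintro ⟨s, ⟨h₀, hs⟩, -, hs₁⟩
    have hs₁' : l[s.toNat + 1]? = some b := by
      rwa [show (s + 1).toNat = s.toNat + 1 by omega] at hs₁
    have hlen := (List.getElem?_eq_some_iff.1 hs₁').1
    refine ⟨s.toNat, by simp only [List.length_cons, List.length_nil]; omega, fun i hi => ?_⟩
    simp only [List.length_cons, List.length_nil] at hi
    interval_cases i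
    · simpa using hs
    · simpa [add_comm] using hs₁'

end ZeroExt

lemma zeroExt_zeros_append_append_zeros (m m' : ℕ) (w : List (Fin 3)) (t : ℤ) :
    zeroExt (zeros m ++ w ++ zeros m') t = zeroExt w (t - m) := by
  rw [zeros, zeros, zeroExt_append_replicate_zero, zeroExt_replicate_zero_append]

lemma occursAt_zeros_append_append_zeros_iff (w : List (Fin 3)) (m m' : ℕ) (x : ℤ → Fin 3)
    (i : ℤ) : OccursAt (zeros m ++ w ++ zeros m') x i ↔
      ∀ t : ℤ, i ≤ t → t < i + m + w.length + m' → x t = zeroExt w (t - i - m) := by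
  rw [occursAt_iff_zeroExt]
  constructor
  · intro h t h₁ h₂
    have := h (t - i) (by omega)
      (by simp only [zeros, List.length_append, List.length_replicate]; omega)
    rwa [add_sub_cancel, zeroExt_zeros_append_append_zeros] at this
  · intro h k h₁ h₂
    simp only [zeros, List.length_append, List.length_replicate, Nat.cast_add] at h₂
    rw [h (i + k) (by omega) (by omega), zeroExt_zeros_append_append_zeros]
    congr 1
    ring

/-- The requirement of stability on one run `f_{[i,j]} = 0 aⁿ 0`. -/
def RunCondition (f : ℤ → Fin 3) (n : ℕ) (a : Fin 3) (i j : ℤ) : Prop :=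
  f i = 0 → f j = 0 → (∀ k : ℤ, i < k → k < j → f k = a) →
    (a = 1 ↔ (n ∈ wordI ∧ (f (i - n), f (j + n)) ∈ setJ) ∨
      (n ∉ wordI ∧ (f (i - n), f (j + n)) ∉ setJ))

lemma runCondition_shift_iff {f g : ℤ → Fin 3} {n : ℕ} {a : Fin 3} {i j : ℤ} (c : ℤ)
    (hij : i ≤ j) (h : ∀ t, i - n ≤ t → t ≤ j + n → f (t + c) = g t) :
    RunCondition f n a (i + c) (j + c) ↔ RunCondition g n a i j := by
  have hrun : (∀ k, i + c < k → k < j + c → f k = a) ↔ ∀ k, i < k → k < j → g k = a := by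
    refine ⟨fun H k h₁ h₂ => ?_, fun H k h₁ h₂ => ?_⟩
    · rw [← h k (by omega) (by omega)]
      exact H _ (by omega) (by omega)
    · rw [← sub_add_cancel k c, h (k - c) (by omega) (by omega)]
      exact H _ (by omega) (by omega)
  unfold RunCondition
  rw [hrun, h i (by omega) (by omega), h j (by omega) (by omega),
    show i + c - n = i - n + c by ring, h (i - n) le_rfl (by omega),
    show j + c + n = j + n + c by ring, h (j + n) (by omega) le_rfl]

/-- `Stable`, read on the zero extension (see `stable_iff_isStableSeq`); "no `12` and no `21`"
becomes "nonzero neighbours agree". -/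
def IsStableSeq (f : ℤ → Fin 3) : Prop :=
  (∀ s, f s ≠ 0 → f (s + 1) ≠ 0 → f s = f (s + 1)) ∧
    ∀ (n : ℕ) (a : Fin 3) (i j : ℤ), 1 ≤ n → (a = 1 ∨ a = 2) → j = i + n + 1 →
      RunCondition f n a i j

lemma not_infix_mixed_pairs_iff (w : List (Fin 3)) :
    (¬ [1, 2] <:+: w ∧ ¬ [2, 1] <:+: w) ↔
      ∀ s, zeroExt w s ≠ 0 → zeroExt w (s + 1) ≠ 0 → zeroExt w s = zeroExt w (s + 1) := by
  rw [infix_pair_iff (by decide) (by decide), infix_pair_iff (by decide) (by decide)]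
  constructor
  · rintro ⟨h₁₂, h₂₁⟩ s hs hs₁
    by_contra hne
    have mixed : ∀ a b : Fin 3, a ≠ 0 → b ≠ 0 → a ≠ b → (a = 1 ∧ b = 2) ∨ (a = 2 ∧ b = 1) := by
      decide
    rcases mixed _ _ hs hs₁ hne with h | h
    · exact h₁₂ ⟨s, h⟩
    · exact h₂₁ ⟨s, h⟩
  · intro h
    constructor <;> rintro ⟨s, h₁, h₂⟩ <;> simpa [h₁, h₂] using h s

lemma runCondition_zeroExt_of_stable {w : List (Fin 3)} (hw : Stable w) {n : ℕ} {a : Fin 3}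
    {i j : ℤ} (hn : 1 ≤ n) (ha : a = 1 ∨ a = 2) (hj : j = i + n + 1) :
    RunCondition (zeroExt w) n a i j := by
  intro hi₀ hj₀ hrun
  have ha₀ : a ≠ 0 := by rcases ha with rfl | rfl <;> decide
  have hi := bounds_of_zeroExt_ne_zero (s := i + 1) (hrun (i + 1) (by omega) (by omega) ▸ ha₀)
  have hj' := bounds_of_zeroExt_ne_zero (s := j - 1) (hrun (j - 1) (by omega) (by omega) ▸ ha₀)
  set c : ℤ := w.length + 2
  have hx : OccursAt (zeros (w.length + 1) ++ w ++ zeros (w.length + 1))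
      (fun t => zeroExt w (t - c)) 1 := by
    rw [occursAt_zeros_append_append_zeros_iff]
    intro t _ _
    congr 1
    push_cast
    ring
  have hstable : RunCondition (fun t => zeroExt w (t - c)) n a (i + c) (j + c) :=
    hw.2.2 _ hx n a (i + c) (j + c) hn (by omega) ha (by omega) (by omega) (by omega)
    (by omega)
  exact (runCondition_shift_iff c (by omega) (fun t _ _ => by simp)).1 hstable hi₀ hj₀ hrun

lemma stable_iff_isStableSeq (w : List (Fin 3)) : Stable w ↔ IsStableSeq (zeroExt w) := by
  constructor
  · intro hw
    exact ⟨(not_infix_mixed_pairs_iff w).1 ⟨hw.1, hw.2.1⟩,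
      fun n a i j hn ha hj => runCondition_zeroExt_of_stable hw hn ha hj⟩
  · rintro ⟨hmixed, hw⟩
    obtain ⟨h₁₂, h₂₁⟩ := (not_infix_mixed_pairs_iff w).2 hmixed
    refine ⟨h₁₂, h₂₁, fun x hx n a i j hn hnw ha hi hij hjw hj => ?_⟩
    set c : ℤ := w.length + 2
    rw [occursAt_zeros_append_append_zeros_iff] at hx
    have hshift := runCondition_shift_iff (f := x) (g := zeroExt w) (n := n) (a := a)
      (i := i - c) (j := j - c) c (by omega) (fun t _ _ => by
        rw [hx _ (by omega) (by omega)]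
        congr 1
        push_cast
        ring)
    have hx_run : RunCondition x n a i j := by
      simpa using hshift.2 (hw n a (i - c) (j - c) hn ha (by omega))
    exact hx_run

section PaddedCopy

variable {α : Type*} [Zero α]

/-- `f` contains `0^{|w|+1} w 0^{|w|}`, with the first letter of `w` at index `off`. -/
def PaddedCopyAt (w : List α) (f : ℤ → α) (off : ℤ) : Prop :=
  ∀ t : ℤ, -(w.length + 1 : ℤ) ≤ t → t ≤ 2 * w.length → f (off + t) = zeroExt w t

lemma paddedCopyAt_zeroExt_self (w : List α) : PaddedCopyAt w (zeroExt w) 0 :=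
  fun t _ _ => by rw [zero_add]

lemma PaddedCopyAt.append_right {w u : List α} {off : ℤ} (h : PaddedCopyAt w (zeroExt u) off)
    (hoff : off + 2 * w.length < u.length) (v : List α) :
    PaddedCopyAt w (zeroExt (u ++ v)) off :=
  fun t h₁ h₂ => by rw [zeroExt_append_of_lt (by omega), h t h₁ h₂]

lemma PaddedCopyAt.append_left {w v : List α} {off : ℤ} (h : PaddedCopyAt w (zeroExt v) off)
    (hoff : w.length + 1 ≤ off) (u : List α) :
    PaddedCopyAt w (zeroExt (u ++ v)) (u.length + off) :=
  fun t h₁ h₂ => by rw [zeroExt_append_of_le (by omega), ← h t h₁ h₂]; congr 1; ring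

lemma PaddedCopyAt.replicate_zero_append {w v : List α} {off : ℤ}
    (h : PaddedCopyAt w (zeroExt v) off) (m : ℕ) :
    PaddedCopyAt w (zeroExt (List.replicate m 0 ++ v)) (m + off) :=
  fun t h₁ h₂ => by rw [zeroExt_replicate_zero_append, ← h t h₁ h₂]; congr 1; ring

end PaddedCopy

def IsCoveredByStable (f : ℤ → Fin 3) : Prop :=
  ∀ p, f p ≠ 0 → ∃ w off, Stable w ∧ PaddedCopyAt w f off ∧ off ≤ p ∧ p < off + w.length

lemma IsCoveredByStable.isStableSeq {f : ℤ → Fin 3} (h : IsCoveredByStable f) :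
    IsStableSeq f := by
  constructor
  · intro s hs hs₁
    obtain ⟨w, off, hw, hcopy, h₁, h₂⟩ := h s hs
    have e₀ := hcopy (s - off) (by omega) (by omega)
    have e₁ := hcopy (s - off + 1) (by omega) (by omega)
    rw [add_sub_cancel] at e₀
    rw [← add_assoc, add_sub_cancel] at e₁
    rw [e₀] at hs ⊢
    rw [e₁] at hs₁ ⊢
    exact ((stable_iff_isStableSeq w).1 hw).1 _ hs hs₁
  · intro n a i j hn ha hj hi₀ hj₀ hrun
    have ha₀ : a ≠ 0 := by rcases ha with rfl | rfl <;> decide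
    obtain ⟨w, off, hw, hcopy, h₁, h₂⟩ := h (i + 1) (hrun (i + 1) (by omega) (by omega) ▸ ha₀)
    -- the run cannot leave the copy of `w`, which is followed by a zero
    have hjw : j ≤ off + w.length := by
      by_contra hlt
      apply ha₀
      rw [← hrun (off + w.length) (by omega) (by omega), hcopy _ (by omega) (by omega),
        zeroExt_of_length_le le_rfl]
    have hshift := runCondition_shift_iff (f := f) (g := zeroExt w) (n := n) (a := a)
      (i := i - off) (j := j - off) off (by omega)
      (fun t _ _ => by rw [add_comm]; exact hcopy t (by omega) (by omega))
    have hf_run : RunCondition f n a i j := by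
      simpa using hshift.2 (((stable_iff_isStableSeq w).1 hw).2 n a (i - off) (j - off) hn ha
        (by omega))
    exact hf_run hi₀ hj₀ hrun

lemma stable_of_isCoveredByStable {W : List (Fin 3)} (h : IsCoveredByStable (zeroExt W)) :
    Stable W :=
  (stable_iff_isStableSeq W).2 h.isStableSeq

lemma isCoveredByStable_append_zeros_append {w w' : List (Fin 3)} {n : ℕ} (hw : Stable w)
    (hw' : Stable w') (hn : w.length ≤ n) (hn' : w'.length ≤ n) :
    IsCoveredByStable (zeroExt (w ++ zeros (n + 1) ++ w')) := by
  intro p hp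
  have hp₀ := bounds_of_zeroExt_ne_zero hp
  rcases lt_or_ge p w.length with hpw | hpw
  · have hcopy : PaddedCopyAt w (zeroExt (w ++ zeros (n + 1))) 0 := by
      rw [zeros, zeroExt_append_replicate_zero]
      exact paddedCopyAt_zeroExt_self w
    have hlen : 0 + 2 * (w.length : ℤ) < (w ++ zeros (n + 1)).length := by
      simp only [zeros, List.length_append, List.length_replicate]; omega
    exact ⟨w, 0, hw, hcopy.append_right hlen w', by omega, by omega⟩
  · rw [List.append_assoc, zeroExt_append_of_le hpw, zeros,
      zeroExt_replicate_zero_append] at hp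
    have hp' := bounds_of_zeroExt_ne_zero hp
    have hcopy := ((paddedCopyAt_zeroExt_self w').replicate_zero_append (n + 1)).append_left
      (by omega) w
    rw [← List.append_assoc] at hcopy
    exact ⟨w', _, hw', hcopy, by push_cast at hp' ⊢; omega, by push_cast at hp' ⊢; omega⟩

/-- Like `IsCoveredByStable`, but with the padded copies inside `W`, so that the covering
survives concatenation. -/
def IsCoveredByStableInside (W : List (Fin 3)) : Prop :=
  ∀ p, zeroExt W p ≠ 0 → ∃ w off, Stable w ∧ PaddedCopyAt w (zeroExt W) off ∧ off ≤ p ∧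
    p < off + w.length ∧ w.length + 1 ≤ off ∧ off + 2 * w.length < W.length

lemma IsCoveredByStableInside.isCoveredByStable {W : List (Fin 3)}
    (h : IsCoveredByStableInside W) : IsCoveredByStable (zeroExt W) := fun p hp =>
  let ⟨w, off, hw, hcopy, h₁, h₂, _⟩ := h p hp
  ⟨w, off, hw, hcopy, h₁, h₂⟩

lemma IsCoveredByStableInside.append {u v : List (Fin 3)} (hu : IsCoveredByStableInside u)
    (hv : IsCoveredByStableInside v) : IsCoveredByStableInside (u ++ v) := by
  intro p hp
  rcases lt_or_ge p u.length with hpu | hpu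
  · rw [zeroExt_append_of_lt hpu] at hp
    obtain ⟨w, off, hw, hcopy, h₁, h₂, h₃, h₄⟩ := hu p hp
    exact ⟨w, off, hw, hcopy.append_right h₄ v, h₁, h₂, h₃,
      by simp only [List.length_append]; omega⟩
  · rw [zeroExt_append_of_le hpu] at hp
    obtain ⟨w, off, hw, hcopy, h₁, h₂, h₃, h₄⟩ := hv _ hp
    exact ⟨w, u.length + off, hw, hcopy.append_left h₃ u, by omega, by omega, by omega,
      by simp only [List.length_append]; omega⟩

lemma isCoveredByStableInside_of_mem_codeC {u : List (Fin 3)} (hu : u ∈ codeC) :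
    IsCoveredByStableInside u := by
  rcases hu with rfl | ⟨w, hw, rfl⟩
  · intro p hp
    exact absurd (congrFun (zeroExt_replicate_zero 1) p) hp
  · intro p hp
    rw [zeroExt_zeros_append_append_zeros] at hp
    have hp' := bounds_of_zeroExt_ne_zero hp
    refine ⟨w, w.length + 1, hw, fun t _ _ => ?_, by push_cast at hp'; omega,
      by push_cast at hp'; omega, le_rfl,
      by simp only [zeros, List.length_append, List.length_replicate]; omega⟩
    rw [zeroExt_zeros_append_append_zeros]
    congr 1
    push_cast
    ring

lemma isCoveredByStableInside_flatten (L : List (List (Fin 3))) (hL : ∀ u ∈ L, u ∈ codeC) :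
    IsCoveredByStableInside L.flatten := by
  induction L with
  | nil => exact fun p hp => absurd (congrFun (zeroExt_replicate_zero 0) p) hp
  | cons u L ih =>
    rw [List.flatten_cons]
    exact (isCoveredByStableInside_of_mem_codeC (hL u (by simp))).append
      (ih fun v hv => hL v (by simp [hv]))

/-- If `w` and `w'` are stable and `n ≥ max {|w|, |w'|}`, then `w 0^{n+1} w'` is stable.
Consequently, every finite concatenation of blocks from the code `C` is stable. -/
theorem stable_append :
    (∀ (w w' : List (Fin 3)) (n : ℕ), Stable w → Stable w' →
      w.length ≤ n → w'.length ≤ n → Stable (w ++ zeros (n + 1) ++ w')) ∧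
    (∀ L : List (List (Fin 3)), (∀ u ∈ L, u ∈ codeC) → Stable L.flatten) :=
  ⟨fun _ _ _ hw hw' hn hn' =>
      stable_of_isCoveredByStable (isCoveredByStable_append_zeros_append hw hw' hn hn'),
    fun L hL =>
      stable_of_isCoveredByStable (isCoveredByStableInside_flatten L hL).isCoveredByStable⟩
end

section
/- A point x ∈ {0,1,2}^ℤ belongs to W if and only if for every n ≥ 0 there is a stable block w such that x_{[−n, n]} is a subblock of w. -/
open Set Function

/-!
A point lies in `W` iff each of its central blocks is a block of some concatenation of code
words. Such a block sits inside the block `B` between two cut points of the concatenation, and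
`B` is stable: a zero-free stretch of a concatenation lies inside the core `w` of a single code
word `0^{|w|+1} w 0^{|w|+1}`, so `B` contains no `12` or `21`; a run `0 aⁿ 0` of `B` lies, together
with its `n` flanking symbols on either side, inside one such code word, where the stability of
`w` decides it. Conversely, a stable `w` containing `x_{[-n,n]}` gives the concatenation
`⋯ 0 0 0^{|w|+1} w 0^{|w|+1} 0 0 ⋯`, which agrees with `x` on `[-n, n]`.
-/

section Words

variable {A : Type*}

def window (x : ℤ → A) (s : ℤ) (n : ℕ) : List A :=
  List.ofFn fun k : Fin n => x (s + (k : ℕ))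

@[simp]
lemma length_window (x : ℤ → A) (s : ℤ) (n : ℕ) : (window x s n).length = n :=
  List.length_ofFn

lemma window_add (x : ℤ → A) (s : ℤ) (m n : ℕ) :
    window x s (m + n) = window x s m ++ window x (s + m) n := by
  simp [window, List.ofFn_add, add_assoc]

lemma window_congr {x y : ℤ → A} {s : ℤ} {n : ℕ}
    (h : ∀ i, s ≤ i → i < s + n → x i = y i) : window x s n = window y s n := by
  simp only [window, List.ofFn_inj]
  funext k
  exact h _ (by omega) (by omega)

lemma window_infix_window (x : ℤ → A) {s k : ℤ} {m n : ℕ} (hk : s ≤ k)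
    (hkm : k + m ≤ s + n) : window x k m <:+: window x s n := by
  obtain ⟨r, hr⟩ : ∃ r : ℕ, n = (k - s).toNat + (m + r) :=
    ⟨(s + n - (k + m)).toNat, by omega⟩
  refine ⟨window x s (k - s).toNat, window x (k + m) r, ?_⟩
  rw [hr, window_add, window_add, show s + ((k - s).toNat : ℕ) = k by omega, List.append_assoc]

lemma occursAt_iff_window_eq {w : List A} {x : ℤ → A} {s : ℤ} :
    OccursAt w x s ↔ window x s w.length = w := by
  simp [List.ext_get_iff, window, OccursAt, Fin.forall_iff]

lemma occursAt_window_self (x : ℤ → A) (s : ℤ) (n : ℕ) : OccursAt (window x s n) x s :=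
  occursAt_iff_window_eq.2 (by rw [length_window])

lemma occursAt_window_iff {x y : ℤ → A} {s L : ℤ} {n : ℕ} :
    OccursAt (window y L n) x s ↔ ∀ i, s ≤ i → i < s + n → x i = y (L + (i - s)) := by
  simp only [OccursAt, window, List.get_eq_getElem, List.getElem_ofFn, Fin.forall_iff,
    List.length_ofFn]
  refine ⟨fun h i hi hi' => ?_, fun h k hk => ?_⟩
  · have := h (i - s).toNat (by omega)
    rwa [show s + ((i - s).toNat : ℕ) = i by omega,
      show (((i - s).toNat : ℕ) : ℤ) = i - s by omega] at this
  · rw [h _ (by omega) (by omega), add_sub_cancel_left]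

lemma occursAt_append {u v : List A} {x : ℤ → A} {s : ℤ} :
    OccursAt (u ++ v) x s ↔ OccursAt u x s ∧ OccursAt v x (s + u.length) := by
  simp only [occursAt_iff_window_eq, List.length_append, window_add]
  exact ⟨fun h => List.append_inj h (by simp), fun ⟨hu, hv⟩ => by rw [hu, hv]⟩

lemma occursAt_replicate {x : ℤ → A} {s : ℤ} {n : ℕ} {a : A} :
    OccursAt (List.replicate n a) x s ↔ ∀ i, s ≤ i → i < s + n → x i = a := by
  simp only [OccursAt, List.get_eq_getElem, List.getElem_replicate, Fin.forall_iff,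
    List.length_replicate]
  refine ⟨fun h i hi hi' => ?_, fun h k hk => h _ (by omega) (by omega)⟩
  have := h (i - s).toNat (by omega)
  rwa [show s + ((i - s).toNat : ℕ) = i by omega] at this

lemma occursAt_shiftZ {w : List A} {x : ℤ → A} {s d : ℤ} :
    OccursAt w (shiftZ A d x) s ↔ OccursAt w x (s + d) := by
  simp [OccursAt, shiftZ, add_right_comm]

lemma OccursAt.exists_of_infix {u w : List A} {x : ℤ → A} {s : ℤ} (h : OccursAt w x s)
    (hu : u <:+: w) : ∃ k, OccursAt u x k := by
  obtain ⟨l, r, rfl⟩ := hu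
  exact ⟨_, (occursAt_append.1 (occursAt_append.1 h).1).2⟩

lemma OccursAt.infix_of_occursAt {u w : List A} {x : ℤ → A} {s k : ℤ} (hw : OccursAt w x s)
    (hu : OccursAt u x k) (hk : s ≤ k) (hku : k + u.length ≤ s + w.length) : u <:+: w := by
  rw [occursAt_iff_window_eq] at hw hu
  rw [← hw, ← hu]
  exact window_infix_window x hk hku

lemma OccursAt.apply_mem {w : List A} {x : ℤ → A} {s i : ℤ} (h : OccursAt w x s)
    (hi : s ≤ i) (hi' : i < s + w.length) : x i ∈ w := by
  have := h ⟨(i - s).toNat, by omega⟩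
  rw [show s + ((i - s).toNat : ℕ) = i by omega] at this
  exact this ▸ List.get_mem _ _

lemma mem_closure_iff_forall_eqOn_Icc [TopologicalSpace A] [DiscreteTopology A]
    {S : Set (ℤ → A)} {x : ℤ → A} :
    x ∈ closure S ↔ ∀ n : ℕ, ∃ y ∈ S, EqOn y x (Icc (-(n : ℤ)) n) := by
  refine ⟨fun hx n => ?_, fun h => ?_⟩
  · have hopen : IsOpen ((Icc (-(n : ℤ)) n).pi fun i => {x i}) :=
      isOpen_set_pi (finite_Icc _ _) fun _ _ => isOpen_discrete _
    obtain ⟨y, hyx, hyS⟩ := mem_closure_iff.1 hx _ hopen fun i _ => rfl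
    exact ⟨y, hyS, fun i hi => hyx i hi⟩
  · choose y hyS hyx using h
    refine mem_closure_of_tendsto (b := Filter.atTop) (tendsto_pi_nhds.2 fun i => ?_)
      (Filter.Eventually.of_forall hyS)
    refine tendsto_const_nhds.congr' ?_
    filter_upwards [Filter.eventually_ge_atTop i.natAbs] with n hn
    exact (hyx n ⟨by omega, by omega⟩).symm

/-- `IsConcat C x` unfolds to `∃ t, IsParsing C x t`; `t j` is the position of the `j`-th word. -/
def IsParsing (C : Set (List A)) (x : ℤ → A) (t : ℤ → ℤ) : Prop :=
  StrictMono t ∧ (∀ n : ℤ, ∃ j : ℤ, t j ≤ n ∧ n < t (j + 1)) ∧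
    ∀ j : ℤ, ∃ w ∈ C, t (j + 1) = t j + w.length ∧ OccursAt w x (t j)

lemma IsParsing.exists_word {C : Set (List A)} {x : ℤ → A} {t : ℤ → ℤ}
    (h : IsParsing C x t) (k : ℤ) :
    ∃ m, ∃ w ∈ C, t m ≤ k ∧ k < t m + w.length ∧ t (m + 1) = t m + w.length ∧
      OccursAt w x (t m) := by
  obtain ⟨m, hmk, hkm⟩ := h.2.1 k
  obtain ⟨w, hw, hlen, hocc⟩ := h.2.2 m
  exact ⟨m, w, hw, hmk, hlen ▸ hkm, hlen, hocc⟩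

def embedWord (a : A) (u : List A) (s : ℤ) : ℤ → A :=
  fun i => if s ≤ i then u.getD (i - s).toNat a else a

lemma occursAt_embedWord (a : A) (u : List A) (s : ℤ) : OccursAt u (embedWord a u s) s := by
  intro k
  simp [embedWord]

lemma embedWord_eq_of_lt {a : A} {u : List A} {s i : ℤ} (hi : i < s ∨ s + u.length ≤ i) :
    embedWord a u s i = a := by
  unfold embedWord
  split_ifs
  · exact List.getD_eq_default _ _ (by omega)
  · rfl

lemma isConcat_embedWord {C : Set (List A)} {a : A} {u : List A} (ha : [a] ∈ C) (hu : u ∈ C)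
    (hne : u ≠ []) (s : ℤ) : IsConcat C (embedWord a u s) := by
  have hlen : 0 < u.length := List.length_pos_iff.2 hne
  refine ⟨fun j => if j ≤ 0 then s + j else s + u.length - 1 + j,
    strictMono_int_of_lt_succ fun j => by split_ifs <;> omega, fun n => ?_, fun j => ?_⟩
  · rcases lt_or_ge n s with h | h
    · exact ⟨n - s, by dsimp only; split_ifs <;> omega⟩
    rcases lt_or_ge n (s + u.length) with h' | h'
    · exact ⟨0, by dsimp only; split_ifs <;> omega⟩
    · exact ⟨n - s - u.length + 1, by dsimp only; split_ifs <;> omega⟩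
  rcases eq_or_ne j 0 with rfl | hj
  · exact ⟨u, hu, by simp, by simpa using occursAt_embedWord a u s⟩
  refine ⟨[a], ha, by dsimp only; split_ifs <;> simp only [List.length_singleton, Nat.cast_one] <;> omega, fun k => ?_⟩
  simpa using embedWord_eq_of_lt (by split_ifs <;> omega)

end Words

section CodeWords

def padded (w : List (Fin 3)) : List (Fin 3) := zeros (w.length + 1) ++ w ++ zeros (w.length + 1)

lemma mem_codeC_iff {u : List (Fin 3)} :
    u ∈ codeC ↔ u = [0] ∨ ∃ w, Stable w ∧ u = padded w :=
  Iff.rfl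

lemma padded_mem_codeC {w : List (Fin 3)} (hw : Stable w) : padded w ∈ codeC :=
  mem_codeC_iff.2 (Or.inr ⟨w, hw, rfl⟩)

lemma length_padded (w : List (Fin 3)) : (padded w).length = 3 * w.length + 2 := by
  simp only [padded, zeros, List.length_append, List.length_replicate]
  omega

lemma occursAt_padded_iff {w : List (Fin 3)} {x : ℤ → Fin 3} {s : ℤ} :
    OccursAt (padded w) x s ↔ (∀ i, s ≤ i → i ≤ s + w.length → x i = 0) ∧
      OccursAt w x (s + w.length + 1) ∧
      ∀ i, s + 2 * w.length + 1 ≤ i → i ≤ s + 3 * w.length + 1 → x i = 0 := by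
  simp only [padded, zeros, occursAt_append, occursAt_replicate, List.length_append,
    List.length_replicate]
  push_cast
  rw [and_assoc, ← add_assoc]
  refine and_congr (forall_congr' fun i => by omega) (and_congr_right' (forall_congr' fun i => ?_))
  omega

lemma apply_eq_zero_of_mem_codeC {u : List (Fin 3)} {x : ℤ → Fin 3} {s : ℤ} (hu : u ∈ codeC)
    (h : OccursAt u x s) : x s = 0 ∧ x (s + u.length - 1) = 0 := by
  rcases mem_codeC_iff.1 hu with rfl | ⟨w, -, rfl⟩
  · simpa using h ⟨0, by simp⟩
  · obtain ⟨hleft, -, hright⟩ := occursAt_padded_iff.1 h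
    rw [length_padded]
    exact ⟨hleft s le_rfl (by omega), hright _ (by omega) (by omega)⟩

def RunRule (n : ℕ) (a p q : Fin 3) : Prop :=
  a = 1 ↔ (n ∈ wordI ∧ (p, q) ∈ setJ) ∨ (n ∉ wordI ∧ (p, q) ∉ setJ)

lemma Stable.runRule {w : List (Fin 3)} (hw : Stable w) {x : ℤ → Fin 3} {s i j : ℤ} {n : ℕ}
    {a : Fin 3} (hx : OccursAt (padded w) x s) (hn : 1 ≤ n) (hnw : n ≤ w.length)
    (ha : a = 1 ∨ a = 2) (hi : s + w.length ≤ i) (hj : j ≤ s + 2 * w.length + 1)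
    (hij : j = i + n + 1) (hxi : x i = 0) (hxj : x j = 0)
    (hrun : ∀ k, i < k → k < j → x k = a) : RunRule n a (x (i - n)) (x (j + n)) := by
  have hshift : ∀ k, shiftZ _ (s - 1) x (k - (s - 1)) = x k := fun k => by simp [shiftZ]
  have := hw.2.2 (shiftZ _ (s - 1) x) (occursAt_shiftZ.2 (by rwa [add_sub_cancel])) n a
    (i - (s - 1)) (j - (s - 1)) hn hnw ha (by omega) (by omega) (by omega) (by omega)
    (by rwa [hshift]) (by rwa [hshift])
    (fun k hk hk' => by simpa [shiftZ] using hrun (k + (s - 1)) (by omega) (by omega))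
  rwa [sub_right_comm, sub_add_eq_add_sub, hshift, hshift] at this

end CodeWords

namespace IsParsing

variable {x : ℤ → Fin 3} {t : ℤ → ℤ}

lemma apply_eq_zero (h : IsParsing codeC x t) (m : ℤ) :
    x (t m) = 0 ∧ x (t (m + 1) - 1) = 0 := by
  obtain ⟨u, hu, hlen, hocc⟩ := h.2.2 m
  rw [hlen]
  exact apply_eq_zero_of_mem_codeC hu hocc

lemma exists_padded_of_ne_zero (h : IsParsing codeC x t) {p q : ℤ} (hpq : p ≤ q)
    (hne : ∀ k, p ≤ k → k ≤ q → x k ≠ 0) :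
    ∃ m w, Stable w ∧ OccursAt (padded w) x (t m) ∧ t (m + 1) = t m + (3 * w.length + 2) ∧
      t m + w.length + 1 ≤ p ∧ q ≤ t m + 2 * w.length := by
  obtain ⟨m, u, hu, hmp, hpm, hlen, hocc⟩ := h.exists_word p
  rcases mem_codeC_iff.1 hu with rfl | ⟨w, hw, rfl⟩
  · have hp : p = t m := by simp only [List.length_singleton, Nat.cast_one] at hpm; omega
    exact absurd (by simpa using hocc ⟨0, by simp⟩) (hp ▸ hne p le_rfl hpq)
  rw [length_padded] at hpm hlen
  obtain ⟨hleft, -, hright⟩ := occursAt_padded_iff.1 hocc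
  have hp : t m + w.length + 1 ≤ p := by
    by_contra
    exact hne p le_rfl hpq (hleft p hmp (by omega))
  refine ⟨m, w, hw, hocc, by rw [hlen]; push_cast; ring, hp, ?_⟩
  by_contra
  exact hne (max p (t m + 2 * w.length + 1)) (le_max_left _ _) (by omega)
    (hright _ (le_max_right _ _) (by push_cast at hpm; omega))

lemma exists_stable_infix (h : IsParsing codeC x t) {u : List (Fin 3)} {s : ℤ} {n : ℕ}
    (hu : u <:+: window x s n) (hne : u ≠ []) (h0 : (0 : Fin 3) ∉ u) :
    ∃ w, Stable w ∧ u <:+: w := by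
  obtain ⟨k, hk⟩ := (occursAt_window_self x s n).exists_of_infix hu
  have hlen := List.length_pos_iff.2 hne
  obtain ⟨m, w, hw, hocc, -, hkm, hkm'⟩ := h.exists_padded_of_ne_zero
    (p := k) (q := k + u.length - 1) (by omega)
    fun i hi hi' hxi => h0 (hxi ▸ hk.apply_mem hi (by omega))
  exact ⟨w, hw, (occursAt_padded_iff.1 hocc).2.1.infix_of_occursAt hk (by omega) (by omega)⟩

lemma runRule (h : IsParsing codeC x t) {i j : ℤ} {n : ℕ} {a : Fin 3} (hn : 1 ≤ n)
    (ha : a = 1 ∨ a = 2) (hij : j = i + n + 1) (hxi : x i = 0) (hxj : x j = 0)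
    (hrun : ∀ k, i < k → k < j → x k = a) :
    ∃ m, t m ≤ i - n ∧ j + n < t (m + 1) ∧ RunRule n a (x (i - n)) (x (j + n)) := by
  have ha0 : a ≠ 0 := by rcases ha with rfl | rfl <;> decide
  obtain ⟨m, w, hw, hocc, hlen, hi, hj⟩ := h.exists_padded_of_ne_zero
    (p := i + 1) (q := j - 1) (by omega)
    fun k hk hk' => (hrun k (by omega) (by omega)).symm ▸ ha0
  exact ⟨m, by omega, by omega,
    hw.runRule hocc hn (by omega) ha (by omega) (by omega) hij hxi hxj hrun⟩

lemma stable_window (h : IsParsing codeC x t) {a b : ℤ} (hab : a < b) :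
    Stable (window x (t a) (t b - t a).toNat) := by
  set L := t a
  set P := (t b - t a).toNat
  have hP : t b = L + P := by have := h.1 hab; omega
  refine ⟨fun h12 => ?_, fun h21 => ?_, ?_⟩
  · obtain ⟨w, hw, h12w⟩ := h.exists_stable_infix h12 (by simp) (by decide)
    exact hw.1 h12w
  · obtain ⟨w, hw, h21w⟩ := h.exists_stable_infix h21 (by simp) (by decide)
    exact hw.2.1 h21w
  intro y hy n c i j hn hnP hc hi hij hj hjn hyi hyj hrun
  change OccursAt (padded (window x L P)) y 1 at hy
  simp only [length_window] at hnP hi hj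
  have hc0 : c ≠ 0 := by rcases hc with rfl | rfl <;> decide
  have hyx : ∀ q : ℤ, P + 2 ≤ q → q ≤ 2 * P + 1 → y q = x (L + (q - (P + 2))) := by
    intro q hq hq'
    have hwin := occursAt_window_iff.1 (occursAt_padded_iff.1 hy).2.1
    simp only [length_window] at hwin
    rw [hwin q (by omega) (by omega), show 1 + (P : ℤ) + 1 = P + 2 by ring]
  -- The window begins and ends with `0`, so the run avoids the padding of `y`.
  have hi' : P + 2 ≤ i := by
    by_contra
    refine hc0 ((hrun (P + 2) (by omega) (by omega)).symm.trans ?_)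
    rw [hyx _ le_rfl (by omega), sub_self, add_zero, (h.apply_eq_zero a).1]
  have hj' : j ≤ 2 * P + 1 := by
    by_contra
    refine hc0 ((hrun (2 * P + 1) (by omega) (by omega)).symm.trans ?_)
    have := (h.apply_eq_zero (b - 1)).2
    rw [sub_add_cancel, hP] at this
    rw [hyx _ (by omega) le_rfl, ← this]
    congr 1
    ring
  obtain ⟨m, hm, hm', hrule⟩ := h.runRule (i := L + (i - (P + 2))) (j := L + (j - (P + 2)))
    hn hc (by omega) (by rwa [← hyx i hi' (by omega)]) (by rwa [← hyx j (by omega) hj'])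
    fun k hk hk' => by
      have := hrun (k - L + (P + 2)) (by omega) (by omega)
      rwa [hyx _ (by omega) (by omega),
        show L + (k - L + (P + 2) - (P + 2)) = k by ring] at this
  have ham : t a ≤ t m :=
    h.1.monotone (by have := h.1.lt_iff_lt.1 (by omega : t a < t (m + 1)); omega)
  have hmb : t (m + 1) ≤ t b :=
    h.1.monotone (by have := h.1.lt_iff_lt.1 (by omega : t m < t b); omega)
  show RunRule n c (y (i - n)) (y (j + n))
  rwa [hyx (i - n) (by omega) (by omega), hyx (j + n) (by omega) (by omega),
    show L + (i - n - (P + 2)) = L + (i - (P + 2)) - n by ring,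
    show L + (j + n - (P + 2)) = L + (j - (P + 2)) + n by ring]

end IsParsing

lemma IsConcat.exists_stable_infix_window {x : ℤ → Fin 3} (hx : IsConcat codeC x) (s : ℤ)
    (n : ℕ) : ∃ w, Stable w ∧ window x s n <:+: w := by
  obtain ⟨t, ht⟩ := hx
  obtain ⟨a, has, -⟩ := ht.2.1 s
  obtain ⟨b, -, hb⟩ := ht.2.1 (s + n)
  have hab : a < b + 1 := ht.1.lt_iff_lt.1 (by omega)
  exact ⟨_, IsParsing.stable_window ht hab, window_infix_window x has (by omega)⟩

lemma exists_isConcat_eq_of_infix_stable {w : List (Fin 3)} (hw : Stable w) {x : ℤ → Fin 3}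
    {s : ℤ} {n : ℕ} (h : window x s n <:+: w) :
    ∃ y, IsConcat codeC y ∧ ∀ i, s ≤ i → i < s + n → y i = x i := by
  obtain ⟨l, r, rfl⟩ := h
  obtain ⟨s₀, hs₀⟩ : ∃ s₀ : ℤ, s₀ + (l ++ window x s n ++ r).length + 1 + l.length = s :=
    ⟨s - l.length - 1 - (l ++ window x s n ++ r).length, by ring⟩
  have hocc := (occursAt_padded_iff.1
    (occursAt_embedWord 0 (padded (l ++ window x s n ++ r)) s₀)).2.1
  rw [occursAt_append, occursAt_append, hs₀] at hocc
  refine ⟨_, isConcat_embedWord (Or.inl rfl) (padded_mem_codeC hw) (by simp [padded, zeros]) s₀,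
    fun i hi hi' => ?_⟩
  rw [occursAt_window_iff.1 hocc.1.2 i hi hi', add_sub_cancel]

/-- A point `x ∈ {0,1,2}^ℤ` belongs to `W` if and only if for every `n ≥ 0` there is a
stable block `w` such that `x_{[-n, n]}` is a subblock of `w`. -/
theorem mem_W_iff_subblocks_stable (x : ℤ → Fin 3) :
    x ∈ spaceW ↔ ∀ n : ℕ, ∃ w : List (Fin 3), Stable w ∧
      (List.ofFn fun k : Fin (2 * n + 1) => x (-(n : ℤ) + (k : ℕ))) <:+: w := by
  rw [spaceW, mem_closure_iff_forall_eqOn_Icc]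
  refine forall_congr' fun n => ⟨fun ⟨y, hy, hyx⟩ => ?_, fun ⟨w, hw, hxw⟩ => ?_⟩
  · obtain ⟨w, hw, hyw⟩ := hy.exists_stable_infix_window (-n) (2 * n + 1)
    refine ⟨w, hw, ?_⟩
    rwa [window_congr fun i hi hi' => hyx ⟨hi, by omega⟩] at hyw
  · obtain ⟨y, hy, hyx⟩ := exists_isConcat_eq_of_infix_stable hw hxw
    exact ⟨y, hy, fun i hi => hyx i hi.1 (by have := hi.2; omega)⟩
end
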